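/- Let Ψ = Ψ₁ + Ψ₂ with Ψ₁ ∈ C²((−1,1)) and Ψ₂ ∈ C²([−1,1]), let m ∈ C⁰([−1,1]) be non-negative with m Ψ″ extending to a function in C⁰([−1,1]), and let P ∈ C⁰([−1,1]) be non-negative with P Ψ′ extending to a function in C⁰([−1,1]) and with √(P(s)) ≤ c₇ m(s) for all s ∈ [−1,−1+ε₀] ∪ [1−ε₀,1], for some c₇ > 0 and ε₀ ∈ (0,1]. Then there exists a constant C > 0, independent of ε, such that for every ε ∈ (0,ε₀] and all s ∈ ℝ: |P_ε(s) Ψ_ε′(s)| ≤ 3‖P Ψ′‖_{C⁰([−1,1])} + C · max{m(1−ε), m(−1+ε), P(1−ε), P(−1+ε)} · (1 + |s|²), where Ψ_ε := Ψ_{1,ε} + Ψ_{2,ε}. -/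
import Mathlib


open Set MeasureTheory

/-- First derivative of the regularization `Ψ_{1,ε}` of `Ψ₁ ∈ C²((-1,1))`. -/
noncomputable def psi1epsD1 (Ψ₁' Ψ₁'' : ℝ → ℝ) (ε s : ℝ) : ℝ :=
  if 1 - ε ≤ s then
    Ψ₁' (1 - ε) + Ψ₁'' (1 - ε) * (s - (1 - ε)) + (1 / 2) * (s - (1 - ε)) ^ 2
  else if s ≤ -1 + ε then
    Ψ₁' (-1 + ε) + Ψ₁'' (-1 + ε) * (s - (ε - 1)) + (1 / 2) * (s - (ε - 1)) * |s - (ε - 1)|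
  else Ψ₁' s

/-- First derivative of the regularization `Ψ_{2,ε}` of `Ψ₂ ∈ C²([-1,1])`. -/
noncomputable def psi2epsD1 (Ψ₂' Ψ₂'' : ℝ → ℝ) (ε s : ℝ) : ℝ :=
  if 1 - ε ≤ s then Ψ₂' (1 - ε) + Ψ₂'' (1 - ε) * (s - (1 - ε))
  else if s ≤ -1 + ε then Ψ₂' (-1 + ε) + Ψ₂'' (-1 + ε) * (s - (ε - 1))
  else Ψ₂' s

/-- The truncated nonlinearity `P_ε`. -/
noncomputable def pEps (P : ℝ → ℝ) (ε s : ℝ) : ℝ :=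
  if 1 - ε ≤ s then P (1 - ε) else if s ≤ -1 + ε then P (-1 + ε) else P s

set_option maxHeartbeats 1000000 in
/-- Bound on the product `P_ε Ψ_ε′`: there is `C > 0`, independent of
`ε ∈ (0,ε₀]`, with `|P_ε(s) Ψ_ε′(s)| ≤ 3‖PΨ′‖_{C⁰([-1,1])} + C·max{m(1-ε),m(-1+ε),P(1-ε),P(-1+ε)}·(1+|s|²)`
for all `s ∈ ℝ`, where `Q` is the continuous extension of `PΨ′` to `[-1,1]` and `R` that of `mΨ″`. -/
theorem stmt_11
    (Ψ₁ Ψ₁' Ψ₁'' Ψ₂ Ψ₂' Ψ₂'' m P Q R : ℝ → ℝ)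
    (hΨ₁d : ∀ s ∈ Ioo (-1 : ℝ) 1, HasDerivAt Ψ₁ (Ψ₁' s) s)
    (hΨ₁d2 : ∀ s ∈ Ioo (-1 : ℝ) 1, HasDerivAt Ψ₁' (Ψ₁'' s) s)
    (hΨ₁''cont : ContinuousOn Ψ₁'' (Ioo (-1 : ℝ) 1))
    (hΨ₂d : ∀ s ∈ Icc (-1 : ℝ) 1, HasDerivWithinAt Ψ₂ (Ψ₂' s) (Icc (-1 : ℝ) 1) s)
    (hΨ₂d2 : ∀ s ∈ Icc (-1 : ℝ) 1, HasDerivWithinAt Ψ₂' (Ψ₂'' s) (Icc (-1 : ℝ) 1) s)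
    (hΨ₂''cont : ContinuousOn Ψ₂'' (Icc (-1 : ℝ) 1))
    (hmcont : ContinuousOn m (Icc (-1 : ℝ) 1))
    (hmnonneg : ∀ s ∈ Icc (-1 : ℝ) 1, 0 ≤ m s)
    (hRcont : ContinuousOn R (Icc (-1 : ℝ) 1))
    (hRext : ∀ s ∈ Ioo (-1 : ℝ) 1, R s = m s * (Ψ₁'' s + Ψ₂'' s))
    (hPcont : ContinuousOn P (Icc (-1 : ℝ) 1))
    (hPnonneg : ∀ s ∈ Icc (-1 : ℝ) 1, 0 ≤ P s)
    (hQcont : ContinuousOn Q (Icc (-1 : ℝ) 1))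
    (hQext : ∀ s ∈ Ioo (-1 : ℝ) 1, Q s = P s * (Ψ₁' s + Ψ₂' s))
    (c₇ : ℝ) (hc₇ : 0 < c₇) (ε₀ : ℝ) (hε₀ : ε₀ ∈ Ioc (0 : ℝ) 1)
    (hPm : ∀ s ∈ Icc (-1 : ℝ) (-1 + ε₀) ∪ Icc (1 - ε₀) 1, Real.sqrt (P s) ≤ c₇ * m s) :
    ∃ C : ℝ, 0 < C ∧ ∀ ε : ℝ, 0 < ε → ε ≤ ε₀ → ∀ s : ℝ,
      |pEps P ε s * (psi1epsD1 Ψ₁' Ψ₁'' ε s + psi2epsD1 Ψ₂' Ψ₂'' ε s)|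
        ≤ 3 * sSup ((fun t => |Q t|) '' Icc (-1 : ℝ) 1)
          + C * max (max (m (1 - ε)) (m (-1 + ε))) (max (P (1 - ε)) (P (-1 + ε)))
            * (1 + |s| ^ 2) := by
  have hIcc : IsCompact (Icc (-1:ℝ) 1) := isCompact_Icc
  have h0m : (0:ℝ) ∈ Icc (-1:ℝ) 1 := by norm_num
  have hQbdd : BddAbove ((fun t => |Q t|) '' Icc (-1:ℝ) 1) :=
    (hIcc.image_of_continuousOn hQcont.abs).bddAbove
  set Qs := sSup ((fun t => |Q t|) '' Icc (-1:ℝ) 1) with hQsdef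
  have hQle : ∀ t ∈ Icc (-1:ℝ) 1, |Q t| ≤ Qs := fun t ht =>
    le_csSup hQbdd (mem_image_of_mem _ ht)
  have hQs0 : 0 ≤ Qs := le_trans (abs_nonneg _) (hQle 0 h0m)
  have hRbdd : BddAbove ((fun t => |R t|) '' Icc (-1:ℝ) 1) :=
    (hIcc.image_of_continuousOn hRcont.abs).bddAbove
  set Rs := sSup ((fun t => |R t|) '' Icc (-1:ℝ) 1) with hRsdef
  have hRle : ∀ t ∈ Icc (-1:ℝ) 1, |R t| ≤ Rs := fun t ht =>
    le_csSup hRbdd (mem_image_of_mem _ ht)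
  have hRs0 : 0 ≤ Rs := le_trans (abs_nonneg _) (hRle 0 h0m)
  obtain ⟨hε₀0, hε₀1⟩ := hε₀
  refine ⟨2 * c₇^2 * Rs + 1, by positivity, fun ε hε hεε₀ s => ?_⟩
  have hε1 : ε ≤ 1 := le_trans hεε₀ hε₀1
  set M := max (max (m (1 - ε)) (m (-1 + ε))) (max (P (1 - ε)) (P (-1 + ε))) with hMdef
  have hpos : (0:ℝ) ≤ 1 + |s|^2 := by positivity
  have haIoo : (1 - ε) ∈ Ioo (-1:ℝ) 1 := ⟨by linarith, by linarith⟩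
  have haIcc : (1 - ε) ∈ Icc (-1:ℝ) 1 := ⟨by linarith, by linarith⟩
  have hbIoo : (-1 + ε) ∈ Ioo (-1:ℝ) 1 := ⟨by linarith, by linarith⟩
  have hbIcc : (-1 + ε) ∈ Icc (-1:ℝ) 1 := ⟨by linarith, by linarith⟩
  have hPa0 : 0 ≤ P (1 - ε) := hPnonneg _ haIcc
  have hPb0 : 0 ≤ P (-1 + ε) := hPnonneg _ hbIcc
  have hma0 : 0 ≤ m (1 - ε) := hmnonneg _ haIcc
  have hmb0 : 0 ≤ m (-1 + ε) := hmnonneg _ hbIcc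
  have hM0 : 0 ≤ M := le_trans hPa0 (le_trans (le_max_left _ _) (le_max_right _ _))
  have hCMpos : 0 ≤ (2 * c₇^2 * Rs + 1) * M * (1 + |s|^2) := by positivity
  by_cases h1 : 1 - ε ≤ s
  · -- right regime
    have hQa : Q (1 - ε) = P (1 - ε) * (Ψ₁' (1 - ε) + Ψ₂' (1 - ε)) := hQext _ haIoo
    have hQaB : |P (1 - ε) * (Ψ₁' (1 - ε) + Ψ₂' (1 - ε))| ≤ Qs := hQa ▸ hQle _ haIcc
    have hRa : |R (1 - ε)| ≤ Rs := hRle _ haIcc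
    rw [hRext _ haIoo] at hRa
    have hsqa : Real.sqrt (P (1 - ε)) ≤ c₇ * m (1 - ε) :=
      hPm _ (Or.inr ⟨by linarith, by linarith⟩)
    have hmX : m (1 - ε) * |Ψ₁'' (1 - ε) + Ψ₂'' (1 - ε)| ≤ Rs := by
      rwa [abs_mul, abs_of_nonneg hma0] at hRa
    have hA : P (1 - ε) * |Ψ₁'' (1 - ε) + Ψ₂'' (1 - ε)| ≤ c₇^2 * (Rs * m (1 - ε)) := by
      have h1' : Real.sqrt (P (1 - ε)) * |Ψ₁'' (1 - ε) + Ψ₂'' (1 - ε)| ≤ c₇ * Rs := by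
        calc Real.sqrt (P (1 - ε)) * |Ψ₁'' (1 - ε) + Ψ₂'' (1 - ε)|
            ≤ (c₇ * m (1 - ε)) * |Ψ₁'' (1 - ε) + Ψ₂'' (1 - ε)| :=
              mul_le_mul_of_nonneg_right hsqa (abs_nonneg _)
          _ = c₇ * (m (1 - ε) * |Ψ₁'' (1 - ε) + Ψ₂'' (1 - ε)|) := by ring
          _ ≤ c₇ * Rs := mul_le_mul_of_nonneg_left hmX hc₇.le
      calc P (1 - ε) * |Ψ₁'' (1 - ε) + Ψ₂'' (1 - ε)|
          = Real.sqrt (P (1 - ε)) * (Real.sqrt (P (1 - ε)) * |Ψ₁'' (1 - ε) + Ψ₂'' (1 - ε)|) := by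
            rw [← mul_assoc, Real.mul_self_sqrt hPa0]
        _ ≤ (c₇ * m (1 - ε)) * (c₇ * Rs) := by
            apply mul_le_mul hsqa h1' (by positivity) (by positivity)
        _ = c₇^2 * (Rs * m (1 - ε)) := by ring
    have hd : |s - (1 - ε)| ≤ 1 + |s| := by
      rw [abs_of_nonneg (by linarith)]
      have := le_abs_self s
      linarith
    have hd2 : (s - (1 - ε))^2 ≤ 2 * (1 + |s|^2) := by
      nlinarith [sq_abs (s - (1 - ε)), mul_self_le_mul_self (abs_nonneg (s - (1 - ε))) hd,
        sq_nonneg (1 - |s|), sq_abs s]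
    have hexp : pEps P ε s * (psi1epsD1 Ψ₁' Ψ₁'' ε s + psi2epsD1 Ψ₂' Ψ₂'' ε s)
        = P (1 - ε) * (Ψ₁' (1 - ε) + Ψ₂' (1 - ε))
          + (P (1 - ε) * (Ψ₁'' (1 - ε) + Ψ₂'' (1 - ε))) * (s - (1 - ε))
          + P (1 - ε) * ((1/2) * (s - (1 - ε))^2) := by
      simp only [pEps, psi1epsD1, psi2epsD1, if_pos h1]; ring
    rw [hexp]
    have hB : |(P (1 - ε) * (Ψ₁'' (1 - ε) + Ψ₂'' (1 - ε))) * (s - (1 - ε))|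
        ≤ (c₇^2 * (Rs * m (1 - ε))) * (2 * (1 + |s|^2)) := by
      rw [abs_mul, abs_mul, abs_of_nonneg hPa0]
      apply mul_le_mul hA _ (abs_nonneg _) (by positivity)
      linarith [hd, sq_nonneg (1 - |s|), sq_nonneg |s|]
    have hC : |P (1 - ε) * ((1/2) * (s - (1 - ε))^2)| ≤ P (1 - ε) * (1 + |s|^2) := by
      rw [abs_of_nonneg (by positivity)]
      nlinarith [hd2, hPa0, mul_le_mul_of_nonneg_left hd2 hPa0]
    have htri := abs_add_three (P (1 - ε) * (Ψ₁' (1 - ε) + Ψ₂' (1 - ε)))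
      ((P (1 - ε) * (Ψ₁'' (1 - ε) + Ψ₂'' (1 - ε))) * (s - (1 - ε)))
      (P (1 - ε) * ((1/2) * (s - (1 - ε))^2))
    have hma_le : m (1 - ε) ≤ M := le_trans (le_max_left _ _) (le_max_left _ _)
    have hPa_le : P (1 - ε) ≤ M := le_trans (le_max_left _ _) (le_max_right _ _)
    have key1 : 2 * c₇^2 * Rs * (m (1 - ε) * (1 + |s|^2)) ≤ 2 * c₇^2 * Rs * (M * (1 + |s|^2)) :=
      mul_le_mul_of_nonneg_left (mul_le_mul_of_nonneg_right hma_le hpos) (by positivity)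
    have key2 : P (1 - ε) * (1 + |s|^2) ≤ M * (1 + |s|^2) :=
      mul_le_mul_of_nonneg_right hPa_le hpos
    linarith [htri, hQaB, hB, hC, key1, key2, hQs0]
  · by_cases h2 : s ≤ -1 + ε
    · -- left regime
      have hQb : Q (-1 + ε) = P (-1 + ε) * (Ψ₁' (-1 + ε) + Ψ₂' (-1 + ε)) := hQext _ hbIoo
      have hQbB : |P (-1 + ε) * (Ψ₁' (-1 + ε) + Ψ₂' (-1 + ε))| ≤ Qs := hQb ▸ hQle _ hbIcc
      have hRb : |R (-1 + ε)| ≤ Rs := hRle _ hbIcc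
      rw [hRext _ hbIoo] at hRb
      have hsqb : Real.sqrt (P (-1 + ε)) ≤ c₇ * m (-1 + ε) :=
        hPm _ (Or.inl ⟨by linarith, by linarith⟩)
      have hmX : m (-1 + ε) * |Ψ₁'' (-1 + ε) + Ψ₂'' (-1 + ε)| ≤ Rs := by
        rwa [abs_mul, abs_of_nonneg hmb0] at hRb
      have hA : P (-1 + ε) * |Ψ₁'' (-1 + ε) + Ψ₂'' (-1 + ε)| ≤ c₇^2 * (Rs * m (-1 + ε)) := by
        have h1' : Real.sqrt (P (-1 + ε)) * |Ψ₁'' (-1 + ε) + Ψ₂'' (-1 + ε)| ≤ c₇ * Rs := by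
          calc Real.sqrt (P (-1 + ε)) * |Ψ₁'' (-1 + ε) + Ψ₂'' (-1 + ε)|
              ≤ (c₇ * m (-1 + ε)) * |Ψ₁'' (-1 + ε) + Ψ₂'' (-1 + ε)| :=
                mul_le_mul_of_nonneg_right hsqb (abs_nonneg _)
            _ = c₇ * (m (-1 + ε) * |Ψ₁'' (-1 + ε) + Ψ₂'' (-1 + ε)|) := by ring
            _ ≤ c₇ * Rs := mul_le_mul_of_nonneg_left hmX hc₇.le
        calc P (-1 + ε) * |Ψ₁'' (-1 + ε) + Ψ₂'' (-1 + ε)|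
            = Real.sqrt (P (-1 + ε)) * (Real.sqrt (P (-1 + ε)) * |Ψ₁'' (-1 + ε) + Ψ₂'' (-1 + ε)|) := by
              rw [← mul_assoc, Real.mul_self_sqrt hPb0]
          _ ≤ (c₇ * m (-1 + ε)) * (c₇ * Rs) := by
              apply mul_le_mul hsqb h1' (by positivity) (by positivity)
          _ = c₇^2 * (Rs * m (-1 + ε)) := by ring
      have habs : |s - (ε - 1)| = -(s - (ε - 1)) := abs_of_nonpos (by linarith)
      have hd : |s - (ε - 1)| ≤ 1 + |s| := by
        rw [habs]
        have := neg_abs_le s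
        linarith
      have hd2 : (s - (ε - 1))^2 ≤ 2 * (1 + |s|^2) := by
        nlinarith [sq_abs (s - (ε - 1)), mul_self_le_mul_self (abs_nonneg (s - (ε - 1))) hd,
          sq_nonneg (1 - |s|), sq_abs s]
      have hexp : pEps P ε s * (psi1epsD1 Ψ₁' Ψ₁'' ε s + psi2epsD1 Ψ₂' Ψ₂'' ε s)
          = P (-1 + ε) * (Ψ₁' (-1 + ε) + Ψ₂' (-1 + ε))
            + (P (-1 + ε) * (Ψ₁'' (-1 + ε) + Ψ₂'' (-1 + ε))) * (s - (ε - 1))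
            + P (-1 + ε) * (-((1/2) * (s - (ε - 1))^2)) := by
        simp only [pEps, psi1epsD1, psi2epsD1, if_neg h1, if_pos h2]
        rw [habs]; ring
      rw [hexp]
      have hB : |(P (-1 + ε) * (Ψ₁'' (-1 + ε) + Ψ₂'' (-1 + ε))) * (s - (ε - 1))|
          ≤ (c₇^2 * (Rs * m (-1 + ε))) * (2 * (1 + |s|^2)) := by
        rw [abs_mul, abs_mul, abs_of_nonneg hPb0]
        apply mul_le_mul hA _ (abs_nonneg _) (by positivity)
        linarith [hd, sq_nonneg (1 - |s|), sq_nonneg |s|]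
      have hC : |P (-1 + ε) * (-((1/2) * (s - (ε - 1))^2))| ≤ P (-1 + ε) * (1 + |s|^2) := by
        rw [abs_mul, abs_of_nonneg hPb0, abs_neg, abs_of_nonneg (by positivity)]
        nlinarith [hd2, hPb0, mul_le_mul_of_nonneg_left hd2 hPb0]
      have htri := abs_add_three (P (-1 + ε) * (Ψ₁' (-1 + ε) + Ψ₂' (-1 + ε)))
        ((P (-1 + ε) * (Ψ₁'' (-1 + ε) + Ψ₂'' (-1 + ε))) * (s - (ε - 1)))
        (P (-1 + ε) * (-((1/2) * (s - (ε - 1))^2)))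
      have hmb_le : m (-1 + ε) ≤ M := le_trans (le_max_right _ _) (le_max_left _ _)
      have hPb_le : P (-1 + ε) ≤ M := le_trans (le_max_right _ _) (le_max_right _ _)
      have key1 : 2 * c₇^2 * Rs * (m (-1 + ε) * (1 + |s|^2)) ≤ 2 * c₇^2 * Rs * (M * (1 + |s|^2)) :=
        mul_le_mul_of_nonneg_left (mul_le_mul_of_nonneg_right hmb_le hpos) (by positivity)
      have key2 : P (-1 + ε) * (1 + |s|^2) ≤ M * (1 + |s|^2) :=
        mul_le_mul_of_nonneg_right hPb_le hpos
      linarith [htri, hQbB, hB, hC, key1, key2, hQs0]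
    · -- middle regime
      push_neg at h1 h2
      have hsIoo : s ∈ Ioo (-1:ℝ) 1 := ⟨by linarith, by linarith⟩
      have hsIcc : s ∈ Icc (-1:ℝ) 1 := ⟨by linarith, by linarith⟩
      have hexp : pEps P ε s * (psi1epsD1 Ψ₁' Ψ₁'' ε s + psi2epsD1 Ψ₂' Ψ₂'' ε s) = Q s := by
        simp only [pEps, psi1epsD1, psi2epsD1, if_neg (not_le.mpr h1), if_neg (not_le.mpr h2)]
        rw [hQext _ hsIoo]
      rw [hexp]
      have := hQle _ hsIcc
      linarith
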